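/- arXiv:1901.10634 — 7 statements merged into one kernel-verified Lean document; each statement's English description precedes it below -/
import Mathlib

section
/- For all real x > 0 and real constant c, the inequality (1 - exp(-c*x))/(1 + exp(-c*x)) < x holds for all x > 0 if and only if c ≤ 2. -/
/-!
The left-hand side is `tanh (c x / 2)`. Since `sinh y < y cosh y` for `y > 0` (the difference
vanishes at `0` and has derivative `y sinh y`), `tanh y < y` there, and `c x / 2 ≤ x` when
`c ≤ 2`.
Conversely `tanh y > y / cosh y` and `cosh y → 1` as `y → 0`, so `tanh` beats any slope `k < 1`
near `0`; for `c > 2` this produces an `x > 0` with `tanh (c x / 2) ≥ x`.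
-/

open Real Filter Topology Set

namespace Real

theorem one_sub_exp_neg_div_one_add_exp_neg (y : ℝ) :
    (1 - exp (-y)) / (1 + exp (-y)) = tanh (y / 2) := by
  have hy : exp y = exp (y / 2) * exp (y / 2) := by rw [← exp_add, add_halves]
  rw [tanh_eq, exp_neg, exp_neg, hy]
  field_simp

theorem tanh_nonpos {y : ℝ} (hy : y ≤ 0) : tanh y ≤ 0 := by
  rw [tanh_eq_sinh_div_cosh]
  exact div_nonpos_of_nonpos_of_nonneg (sinh_nonpos_iff.2 hy) (cosh_pos y).le

theorem strictMonoOn_mul_cosh_sub_sinh : StrictMonoOn (fun y => y * cosh y - sinh y) (Ici 0) := by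
  refine strictMonoOn_of_deriv_pos (convex_Ici 0)
    ((continuous_id.mul continuous_cosh).sub continuous_sinh).continuousOn fun y hy => ?_
  rw [interior_Ici, mem_Ioi] at hy
  have hderiv : HasDerivAt (fun y => y * cosh y - sinh y) (y * sinh y) y :=
    (((hasDerivAt_id' y).fun_mul (hasDerivAt_cosh y)).fun_sub (hasDerivAt_sinh y)).congr_deriv
      (by ring)
  rw [hderiv.deriv]
  exact mul_pos hy (sinh_pos_iff.2 hy)

theorem tanh_lt_self {y : ℝ} (hy : 0 < y) : tanh y < y := by
  have h := strictMonoOn_mul_cosh_sub_sinh self_mem_Ici hy.le hy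
  simp only [zero_mul, sinh_zero, sub_zero, sub_pos] at h
  rwa [tanh_eq_sinh_div_cosh, div_lt_iff₀ (cosh_pos y)]

theorem exists_pos_mul_lt_tanh {k : ℝ} (hk : k < 1) : ∃ y > 0, k * y < tanh y := by
  have hnear : ∀ᶠ y in 𝓝[>] 0, k * cosh y < 1 := by
    refine eventually_nhdsWithin_of_eventually_nhds ?_
    exact (continuous_const.mul continuous_cosh).continuousAt.eventually_lt continuousAt_const
      (by simpa using hk)
  obtain ⟨y, hky, hy⟩ := (hnear.and self_mem_nhdsWithin).exists
  refine ⟨y, hy, ?_⟩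
  calc k * y < y / cosh y := by
        rw [lt_div_iff₀ (cosh_pos y)]
        nlinarith
    _ < tanh y := by
        rw [tanh_eq_sinh_div_cosh]
        exact div_lt_div_of_pos_right (self_lt_sinh_iff.2 hy) (cosh_pos y)

end Real

theorem stmt0 (c : ℝ) :
    (∀ x : ℝ, 0 < x →
      (1 - Real.exp (-(c * x))) / (1 + Real.exp (-(c * x))) < x) ↔ c ≤ 2 := by
  simp only [Real.one_sub_exp_neg_div_one_add_exp_neg]
  constructor
  · intro h
    by_contra! hc
    have hc0 : 0 < c := by linarith
    obtain ⟨y, hy, hlt⟩ := Real.exists_pos_mul_lt_tanh (k := 2 / c) ((div_lt_one hc0).2 hc)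
    have hx := h (2 / c * y) (by positivity)
    rw [show c * (2 / c * y) / 2 = y by field_simp] at hx
    exact hlt.not_gt hx
  · intro hc x hx
    rcases le_or_gt (c * x / 2) 0 with hneg | hpos
    · exact (Real.tanh_nonpos hneg).trans_lt hx
    · exact (Real.tanh_lt_self hpos).trans_le (by nlinarith)
end

section
/- For β > 0, the function K(x,y) = exp(-β|x - y|) on [0,1]×[0,1] is the reproducing kernel of the Sobolev space H¹(0,1) equipped with inner product ⟨f,g⟩ = (1/2)(f(0)g(0) + f(1)g(1)) + (1/(2β))∫₀¹ (f'g' + β² fg) dx; that is, for every f ∈ H¹ and y ∈ [0,1], ⟨f, K(·,y)⟩ = f(y). -/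
/-!
On `[0, y]` the kernel is `e^{β(x-y)}` and on `[y, 1]` it is `e^{-β(x-y)}`; in both cases its
derivative is `±β` times itself, so the integrand is `±β (f K)'`. Since `f` is absolutely
continuous, integrating by parts on each piece gives `β (f(y) - f(0) K(0))` and
`β (f(y) - f(1) K(1))`; dividing by `2β`, the boundary terms cancel those of the inner product
and leave `f(y)`.
-/

open MeasureTheory intervalIntegral Set

section PrimitiveIntegrationByParts

variable {u u' g g' : ℝ → ℝ} {a b c d : ℝ}

theorem intervalIntegrable_mul_add_mul_deriv_of_eq_primitive
    (hu' : IntervalIntegrable u' volume a b)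
    (hu : ∀ x ∈ uIcc a b, u x = u a + ∫ t in a..x, u' t)
    (hg : ∀ x, HasDerivAt g (g' x) x) (hg' : Continuous g')
    (hc : c ∈ uIcc a b) (hd : d ∈ uIcc a b) :
    IntervalIntegrable (fun x => u' x * g x + u x * g' x) volume c d := by
  have hsub : uIcc c d ⊆ uIcc a b := uIcc_subset_uIcc hc hd
  have hucont : ContinuousOn u (uIcc a b) :=
    (continuousOn_const.add (continuousOn_primitive_interval' hu' left_mem_uIcc)).congr hu
  have hgcont : Continuous g := continuous_iff_continuousAt.2 fun x => (hg x).continuousAt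
  exact ((hu'.mono_set hsub).mul_continuousOn hgcont.continuousOn).add
    ((hucont.mono hsub).mul hg'.continuousOn).intervalIntegrable

theorem integral_mul_add_mul_deriv_of_eq_primitive
    (hu' : IntervalIntegrable u' volume a b)
    (hu : ∀ x ∈ uIcc a b, u x = u a + ∫ t in a..x, u' t)
    (hg : ∀ x, HasDerivAt g (g' x) x) (hg' : Continuous g')
    (hc : c ∈ uIcc a b) (hd : d ∈ uIcc a b) :
    ∫ x in c..d, u' x * g x + u x * g' x = u d * g d - u c * g c := by
  have hsub : uIcc c d ⊆ uIcc a b := uIcc_subset_uIcc hc hd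
  set w : ℝ → ℝ := fun x => u a + ∫ t in a..x, u' t
  have hwu : ∀ x ∈ uIcc a b, w x = u x := fun x hx => (hu x hx).symm
  have hw : AbsolutelyContinuousOnInterval w c d :=
    (contDiffOn_const.absolutelyContinuousOnInterval.add
      (hu'.absolutelyContinuousOnInterval_intervalIntegral left_mem_uIcc)).mono hsub
  have hgC1 : ContDiff ℝ 1 g :=
    contDiff_one_iff_deriv.2 ⟨fun x => (hg x).differentiableAt,
      (funext fun x => (hg x).deriv) ▸ hg'⟩
  have hparts := hw.integral_deriv_mul_eq_sub hgC1.contDiffOn.absolutelyContinuousOnInterval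
  rw [hwu c hc, hwu d hd] at hparts
  rw [← hparts]
  refine integral_congr_ae ?_
  filter_upwards [hu'.ae_hasDerivAt_integral] with x hx hxcd
  have hxab : x ∈ uIcc a b := hsub (uIoc_subset_uIcc hxcd)
  rw [((hx hxab a left_mem_uIcc).const_add (u a)).deriv, (hg x).deriv, hwu x hxab]

end PrimitiveIntegrationByParts

theorem hasDerivAt_exp_mul_sub (c y x : ℝ) :
    HasDerivAt (fun x => Real.exp (c * (x - y))) (c * Real.exp (c * (x - y))) x := by
  simpa [mul_comm] using (((hasDerivAt_id x).sub_const y).const_mul c).exp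

theorem stmt7_general (β : ℝ) (hβ : 0 < β) (y : ℝ) (hy : y ∈ Set.Icc (0 : ℝ) 1)
    (f f' : ℝ → ℝ)
    (hint : IntervalIntegrable f' volume 0 1)
    (hrep : ∀ x ∈ Set.Icc (0 : ℝ) 1, f x = f 0 + ∫ t in (0 : ℝ)..x, f' t) :
    (1 / 2) * (f 0 * Real.exp (-β * |0 - y|) + f 1 * Real.exp (-β * |1 - y|)) +
      (1 / (2 * β)) *
        ∫ x in (0 : ℝ)..1,
          (f' x * ((if x < y then β else -β) * Real.exp (-β * |x - y|)) +
            β ^ 2 * f x * Real.exp (-β * |x - y|))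
      = f y := by
  obtain ⟨hy0, hy1⟩ := hy
  rw [← uIcc_of_le zero_le_one] at hrep
  have hy : y ∈ uIcc 0 1 := by rw [uIcc_of_le zero_le_one]; exact ⟨hy0, hy1⟩
  set E : ℝ → ℝ → ℝ := fun c x => Real.exp (c * (x - y))
  set φ : ℝ → ℝ := fun x => f' x * ((if x < y then β else -β) * Real.exp (-β * |x - y|)) +
    β ^ 2 * f x * Real.exp (-β * |x - y|)
  have hleft : EqOn (fun x => β * (f' x * E β x + f x * (β * E β x))) φ (uIoo 0 y) := by
    intro x hx
    rw [uIoo_of_le hy0] at hx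
    simp only [φ, E, if_pos hx.2, abs_of_neg (sub_neg.2 hx.2), neg_mul_neg]
    ring
  have hright :
      EqOn (fun x => -β * (f' x * E (-β) x + f x * (-β * E (-β) x))) φ (uIoo y 1) := by
    intro x hx
    rw [uIoo_of_le hy1] at hx
    simp only [φ, E, if_neg (not_lt.2 hx.1.le), abs_of_pos (sub_pos.2 hx.1)]
    ring
  have hintegrable (c : ℝ) {p q : ℝ} (hp : p ∈ uIcc 0 1) (hq : q ∈ uIcc 0 1) :=
    intervalIntegrable_mul_add_mul_deriv_of_eq_primitive hint hrep
      (hasDerivAt_exp_mul_sub c y) (by fun_prop) hp hq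
  have hparts (c : ℝ) {p q : ℝ} (hp : p ∈ uIcc 0 1) (hq : q ∈ uIcc 0 1) :=
    integral_mul_add_mul_deriv_of_eq_primitive hint hrep
      (hasDerivAt_exp_mul_sub c y) (by fun_prop) hp hq
  rw [← integral_add_adjacent_intervals
      (((hintegrable β left_mem_uIcc hy).const_mul β).congr_uIoo hleft)
      (((hintegrable (-β) hy right_mem_uIcc).const_mul (-β)).congr_uIoo hright),
    ← integral_congr_uIoo hleft, ← integral_congr_uIoo hright,
    intervalIntegral.integral_const_mul, intervalIntegral.integral_const_mul,
    hparts β left_mem_uIcc hy, hparts (-β) hy right_mem_uIcc]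
  simp only [sub_self, mul_zero, Real.exp_zero, zero_sub, abs_neg, abs_of_nonneg hy0,
    abs_of_nonneg (sub_nonneg.2 hy1)]
  field_simp
  ring

theorem stmt7 (β : ℝ) (hβ : 0 < β) (y : ℝ) (hy : y ∈ Set.Icc (0 : ℝ) 1)
    (f f' : ℝ → ℝ)
    (hcont : ContinuousOn f (Set.Icc 0 1))
    (hint : IntervalIntegrable f' volume 0 1)
    (hint2 : IntervalIntegrable (fun x => (f' x) ^ 2) volume 0 1)
    (hrep : ∀ x ∈ Set.Icc (0 : ℝ) 1, f x = f 0 + ∫ t in (0 : ℝ)..x, f' t) :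
    (1 / 2) * (f 0 * Real.exp (-β * |0 - y|) + f 1 * Real.exp (-β * |1 - y|)) +
      (1 / (2 * β)) *
        ∫ x in (0 : ℝ)..1,
          (f' x * ((if x < y then β else -β) * Real.exp (-β * |x - y|)) +
            β ^ 2 * f x * Real.exp (-β * |x - y|))
      = f y :=
  stmt7_general β hβ y hy f f' hint hrep
end

section
/- With K₁₁, K₁₀, K₀₀ the covariance blocks of the exponential kernel exp(-β_n|x-y|) evaluated at odd-index points x₁, x₃, …, x_{2n-1} and even-index points x₀, x₂, …, x_{2n} on the uniform grid x_i = i/(2n), the conditional covariance satisfies K₁₁ - K₁₀·K₀₀⁻¹·K₁₀ᵀ = ((1 - exp(-2β_n))/(1 + exp(-2β_n)))·I, where I is the n×n identity matrix. -/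
/-!
Write `ρ = exp (-β)`, so that all covariances are powers `ρ ^ dist`. The exponential kernel is
Markov: seen from any grid point `y` outside the open interval `(x, x + 2)`,
`ρ ^ dist (x + 1) y = ρ / (1 + ρ²) * (ρ ^ dist x y + ρ ^ dist (x + 2) y)`.
Taking `y` even gives `K₁₀ = M K₀₀`, where `M` adds the two even neighbours of each odd point and
scales by `ρ / (1 + ρ²)`; hence `K₁₀ K₀₀⁻¹ K₁₀ᵀ = M K₁₀ᵀ`. Taking `y` odd shows that `M K₁₀ᵀ` agrees
with `K₁₁` off the diagonal, while on it `1 - 2ρ² / (1 + ρ²) = (1 - ρ²) / (1 + ρ²)`.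
`K₀₀` is the Kac–Murdock–Szegő matrix with parameter `ρ²`: subtracting `ρ²` times each row from
the next makes it upper triangular, so its determinant is `(1 - ρ⁴) ^ n ≠ 0`.
-/

open Matrix

/-- The exponential kernel `exp (-β |x - y|)` at integer points, with `r = exp (-β)`. -/
def powDistMatrix {R ι κ : Type*} [Monoid R] (r : R) (p : ι → ℕ) (q : κ → ℕ) : Matrix ι κ R :=
  of fun i j => r ^ Nat.dist (p i) (q j)

theorem Nat.abs_cast_sub_cast_eq_dist (x y : ℕ) : |(x : ℝ) - y| = Nat.dist x y := by
  rcases le_total x y with h | h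
  · rw [Nat.dist_eq_sub_of_le h, abs_sub_comm, abs_of_nonneg (by simpa), Nat.cast_sub h]
  · rw [Nat.dist_eq_sub_of_le_right h, abs_of_nonneg (by simpa), Nat.cast_sub h]

theorem of_exp_neg_mul_abs_sub {ι κ : Type*} (β : ℝ) (p : ι → ℕ) (q : κ → ℕ) :
    (of fun i j => Real.exp (-β * |(p i : ℝ) - q j|)) = powDistMatrix (Real.exp (-β)) p q := by
  ext i j
  rw [of_apply, Nat.abs_cast_sub_cast_eq_dist, mul_comm, Real.exp_nat_mul]
  rfl

section CommSemiring

variable {R ι κ : Type*} [CommSemiring R]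

theorem powDistMatrix_two_mul (r : R) (p : ι → ℕ) (q : κ → ℕ) :
    powDistMatrix r (fun i => 2 * p i) (fun j => 2 * q j) = powDistMatrix (r ^ 2) p q := by
  ext i j
  simp only [powDistMatrix, of_apply, Nat.dist_mul_left, pow_mul]

theorem pow_dist_mul_add_pow_dist (ρ : R) {x y : ℕ} (hy : y ≠ x + 1) :
    ρ * (ρ ^ Nat.dist x y + ρ ^ Nat.dist (x + 2) y) = (1 + ρ ^ 2) * ρ ^ Nat.dist (x + 1) y := by
  rcases le_or_gt y x with h | h
  · obtain ⟨d, rfl⟩ := Nat.exists_eq_add_of_le h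
    rw [show Nat.dist (y + d) y = d by unfold Nat.dist; omega,
      show Nat.dist (y + d + 2) y = d + 2 by unfold Nat.dist; omega,
      show Nat.dist (y + d + 1) y = d + 1 by unfold Nat.dist; omega]
    ring
  · obtain ⟨d, rfl⟩ := Nat.exists_eq_add_of_le (show x + 2 ≤ y by omega)
    rw [show Nat.dist x (x + 2 + d) = d + 2 by unfold Nat.dist; omega,
      show Nat.dist (x + 2) (x + 2 + d) = d by unfold Nat.dist; omega,
      show Nat.dist (x + 1) (x + 2 + d) = d + 1 by unfold Nat.dist; omega]
    ring

def neighbourSum (R : Type*) [Semiring R] (n : ℕ) : Matrix (Fin n) (Fin (n + 1)) R :=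
  of fun a k => (if k = a.castSucc then 1 else 0) + if k = a.succ then 1 else 0

theorem neighbourSum_mul_apply {n : ℕ} (X : Matrix (Fin (n + 1)) κ R) (a : Fin n) (j : κ) :
    (neighbourSum R n * X) a j = X a.castSucc j + X a.succ j := by
  simp [neighbourSum, mul_apply, add_mul, Finset.sum_add_distrib]

end CommSemiring

theorem det_powDistMatrix_val {R : Type*} [CommRing R] (r : R) (m : ℕ) :
    (powDistMatrix r (Fin.val : Fin (m + 1) → ℕ) Fin.val).det = (1 - r ^ 2) ^ m := by
  set K := powDistMatrix r (Fin.val : Fin (m + 1) → ℕ) Fin.val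
  let U : Matrix (Fin (m + 1)) (Fin (m + 1)) R :=
    of fun i j => Fin.cases (K 0 j) (fun i => K i.succ j - r * K i.castSucc j) i
  have hKU : K.det = U.det :=
    det_eq_of_forall_row_eq_smul_add_pred (fun _ => r) (fun _ => rfl) (fun _ _ => by simp [U])
  have hU : U.IsUpperTriangular := by
    intro i j hji
    cases i using Fin.cases with
    | zero => exact absurd hji (Fin.not_lt_zero j)
    | succ i =>
      have hj : (j : ℕ) ≤ i := by simpa [Fin.lt_def] using hji
      simp only [U, K, powDistMatrix, of_apply, Fin.cases_succ, Fin.val_succ, Fin.val_castSucc]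
      rw [Nat.dist_eq_sub_of_le_right hj, Nat.dist_eq_sub_of_le_right (by omega),
        Nat.sub_add_comm hj, pow_succ']
      ring
  rw [hKU, det_of_isUpperTriangular hU, Fin.prod_univ_succ]
  have hdiag (i : ℕ) : Nat.dist i (i + 1) = 1 := by unfold Nat.dist; omega
  simp [U, K, powDistMatrix, Nat.dist_self, hdiag, ← sq]

section Field

variable {R : Type*} [Field R] (ρ : R) (hρ : 1 + ρ ^ 2 ≠ 0) (n : ℕ)
include hρ

theorem powDistMatrix_odd_even :
    powDistMatrix ρ (fun a : Fin n => 2 * (a : ℕ) + 1) (fun j : Fin (n + 1) => 2 * (j : ℕ)) =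
      (ρ / (1 + ρ ^ 2)) • neighbourSum R n *
        powDistMatrix ρ (fun i : Fin (n + 1) => 2 * (i : ℕ))
          (fun j : Fin (n + 1) => 2 * (j : ℕ)) := by
  ext a j
  have hmarkov := pow_dist_mul_add_pow_dist ρ (x := 2 * a) (y := 2 * j) (by omega)
  simp only [smul_mul, Matrix.smul_apply, neighbourSum_mul_apply, powDistMatrix, of_apply,
    Fin.val_castSucc, Fin.val_succ, mul_add, mul_one, smul_eq_mul]
  field_simp
  linear_combination -hmarkov

theorem powDistMatrix_odd_sub_neighbourSum_mul :
    powDistMatrix ρ (fun a : Fin n => 2 * (a : ℕ) + 1) (fun b : Fin n => 2 * (b : ℕ) + 1) -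
        (ρ / (1 + ρ ^ 2)) • neighbourSum R n *
          (powDistMatrix ρ (fun a : Fin n => 2 * (a : ℕ) + 1)
            (fun j : Fin (n + 1) => 2 * (j : ℕ)))ᵀ =
      ((1 - ρ ^ 2) / (1 + ρ ^ 2)) • (1 : Matrix (Fin n) (Fin n) R) := by
  ext a b
  simp only [Matrix.sub_apply, smul_mul, Matrix.smul_apply, neighbourSum_mul_apply, transpose_apply,
    powDistMatrix, of_apply, Fin.val_castSucc, Fin.val_succ, mul_add, mul_one, smul_eq_mul,
    one_apply]
  rw [Nat.dist_comm _ (2 * (a : ℕ)), Nat.dist_comm _ (2 * (a : ℕ) + 2)]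
  split_ifs with hab
  · subst hab
    have h1 : Nat.dist (2 * (a : ℕ)) (2 * a + 1) = 1 := by unfold Nat.dist; omega
    have h2 : Nat.dist (2 * (a : ℕ) + 2) (2 * a + 1) = 1 := by unfold Nat.dist; omega
    rw [Nat.dist_self, h1, h2]
    field_simp
    ring
  · have hmarkov := pow_dist_mul_add_pow_dist ρ (x := 2 * a) (y := 2 * b + 1)
      (by have := Fin.val_ne_of_ne hab; omega)
    field_simp
    linear_combination -hmarkov

end Field

theorem stmt10_general (n : ℕ) (βn : ℝ) (hβ : 0 < βn)
    (K00 : Matrix (Fin (n + 1)) (Fin (n + 1)) ℝ)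
    (K11 : Matrix (Fin n) (Fin n) ℝ)
    (K10 : Matrix (Fin n) (Fin (n + 1)) ℝ)
    (hK00 : K00 = Matrix.of fun (i j : Fin (n + 1)) =>
      Real.exp (-βn * |(2 * (i : ℕ) : ℝ) - (2 * (j : ℕ) : ℝ)|))
    (hK11 : K11 = Matrix.of fun (a b : Fin n) =>
      Real.exp (-βn * |(2 * (a : ℕ) + 1 : ℝ) - (2 * (b : ℕ) + 1 : ℝ)|))
    (hK10 : K10 = Matrix.of fun (a : Fin n) (b : Fin (n + 1)) =>
      Real.exp (-βn * |(2 * (a : ℕ) + 1 : ℝ) - (2 * (b : ℕ) : ℝ)|)) :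
    K11 - K10 * K00⁻¹ * K10ᵀ =
      ((1 - Real.exp (-2 * βn)) / (1 + Real.exp (-2 * βn))) •
        (1 : Matrix (Fin n) (Fin n) ℝ) := by
  set ρ := Real.exp (-βn)
  have hρ : 1 + ρ ^ 2 ≠ 0 := by positivity
  have hρ2 : Real.exp (-2 * βn) = ρ ^ 2 := by rw [← Real.exp_nat_mul]; ring_nf
  have h00 : K00 = powDistMatrix ρ (fun i : Fin (n + 1) => 2 * (i : ℕ))
      (fun j : Fin (n + 1) => 2 * (j : ℕ)) := by
    rw [hK00, ← of_exp_neg_mul_abs_sub]; push_cast; rfl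
  have h11 : K11 = powDistMatrix ρ (fun a : Fin n => 2 * (a : ℕ) + 1)
      (fun b : Fin n => 2 * (b : ℕ) + 1) := by
    rw [hK11, ← of_exp_neg_mul_abs_sub]; push_cast; rfl
  have h10 : K10 = powDistMatrix ρ (fun a : Fin n => 2 * (a : ℕ) + 1)
      (fun j : Fin (n + 1) => 2 * (j : ℕ)) := by
    rw [hK10, ← of_exp_neg_mul_abs_sub]; push_cast; rfl
  have hdet : IsUnit K00.det := by
    have hρ1 : ρ < 1 := Real.exp_lt_one_iff.mpr (by linarith)
    rw [h00, powDistMatrix_two_mul, det_powDistMatrix_val, isUnit_iff_ne_zero, ← pow_mul]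
    exact pow_ne_zero _ (sub_ne_zero.mpr (pow_lt_one₀ (by positivity) hρ1 (by norm_num)).ne')
  have hinterp : K10 * K00⁻¹ = (ρ / (1 + ρ ^ 2)) • neighbourSum ℝ n := by
    rw [h10, powDistMatrix_odd_even ρ hρ, ← h00, mul_nonsing_inv_cancel_right _ _ hdet]
  rw [hinterp, hρ2, h11, h10, powDistMatrix_odd_sub_neighbourSum_mul ρ hρ]

theorem stmt10 (n : ℕ) (hn : 1 ≤ n) (βn : ℝ) (hβ : 0 < βn)
    (K00 : Matrix (Fin (n + 1)) (Fin (n + 1)) ℝ)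
    (K11 : Matrix (Fin n) (Fin n) ℝ)
    (K10 : Matrix (Fin n) (Fin (n + 1)) ℝ)
    (hK00 : K00 = Matrix.of fun (i j : Fin (n + 1)) =>
      Real.exp (-βn * |(2 * (i : ℕ) : ℝ) - (2 * (j : ℕ) : ℝ)|))
    (hK11 : K11 = Matrix.of fun (a b : Fin n) =>
      Real.exp (-βn * |(2 * (a : ℕ) + 1 : ℝ) - (2 * (b : ℕ) + 1 : ℝ)|))
    (hK10 : K10 = Matrix.of fun (a : Fin n) (b : Fin (n + 1)) =>
      Real.exp (-βn * |(2 * (a : ℕ) + 1 : ℝ) - (2 * (b : ℕ) : ℝ)|)) :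
    K11 - K10 * K00⁻¹ * K10ᵀ =
      ((1 - Real.exp (-2 * βn)) / (1 + Real.exp (-2 * βn))) •
        (1 : Matrix (Fin n) (Fin n) ℝ) :=
  stmt10_general n βn hβ K00 K11 K10 hK00 hK11 hK10
end

section
/- With the same grid and blocks as above, K₁₀·K₀₀⁻¹ = (exp(-β_n)/(1 + exp(-2β_n)))·B, where B is the n×(n+1) matrix with B_{i,i} = B_{i,i+1} = 1 and all other entries 0. -/
open Matrix

private lemma expAbsPow (β : ℝ) (p q : ℕ) :
    Real.exp (-β * |(p : ℝ) - (q : ℝ)|) = Real.exp (-β) ^ Nat.dist p q := by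
  have hik : ∀ a b : ℕ, a ≤ b → ((a:ℝ) ≤ b) := fun a b h => Nat.cast_le.mpr h
  rcases le_total p q with h | h
  · rw [Nat.dist_eq_sub_of_le h, ← Real.exp_nat_mul, abs_of_nonpos (by have := hik p q h; linarith)]
    push_cast [h]
    ring_nf
  · rw [Nat.dist_eq_sub_of_le_right h, ← Real.exp_nat_mul, abs_of_nonneg (by have := hik q p h; linarith)]
    push_cast [h]
    ring_nf

private noncomputable def Mtri (n : ℕ) (x : ℝ) : Matrix (Fin (n+1)) (Fin (n+1)) ℝ :=
  Matrix.of fun k j => (1 - x^2)⁻¹ *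
    ((if k = j then (if (j:ℕ) = 0 ∨ (j:ℕ) = n then 1 else 1 + x^2) else 0)
      + (if (k:ℕ) + 1 = (j:ℕ) then -x else 0)
      + (if (k:ℕ) = (j:ℕ) + 1 then -x else 0))

private lemma K00_mul_Mtri (n : ℕ) (hn : 1 ≤ n) (x : ℝ) (hx0 : 0 < x) (hx1 : x < 1)
    (A : Matrix (Fin (n+1)) (Fin (n+1)) ℝ)
    (hA : ∀ i k : Fin (n+1), A i k = x ^ Nat.dist (i:ℕ) (k:ℕ)) :
    A * Mtri n x = 1 := by
  have h1x2 : (1 : ℝ) - x^2 ≠ 0 := by nlinarith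
  ext i j
  rw [Matrix.mul_apply, Matrix.one_apply]
  have expand : ∀ k : Fin (n+1), A i k * Mtri n x k j =
      (1-x^2)⁻¹ * ((if k = j then x ^ Nat.dist (i:ℕ) (k:ℕ) *
          (if (j:ℕ) = 0 ∨ (j:ℕ) = n then 1 else 1 + x^2) else 0)
        + (if (k:ℕ)+1 = (j:ℕ) then x ^ Nat.dist (i:ℕ) (k:ℕ) * (-x) else 0)
        + (if (k:ℕ) = (j:ℕ)+1 then x ^ Nat.dist (i:ℕ) (k:ℕ) * (-x) else 0)) := by
    intro k
    rw [hA]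
    simp only [Mtri, Matrix.of_apply]
    split_ifs <;>
      first
        | ring
        | (exfalso; simp_all [Fin.ext_iff] <;> omega)
        | (simp_all [Fin.ext_iff] <;> omega)
  rw [Finset.sum_congr rfl (fun k _ => expand k), ← Finset.mul_sum,
    Finset.sum_add_distrib, Finset.sum_add_distrib]
  have hS1 : (∑ k : Fin (n+1), if k = j then x ^ Nat.dist (i:ℕ) (k:ℕ) *
      (if (j:ℕ) = 0 ∨ (j:ℕ) = n then 1 else 1 + x^2) else 0)
      = x ^ Nat.dist (i:ℕ) (j:ℕ) * (if (j:ℕ) = 0 ∨ (j:ℕ) = n then 1 else 1 + x^2) := by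
    simp [Finset.sum_ite_eq']
  have hS2 : (∑ k : Fin (n+1), if (k:ℕ)+1 = (j:ℕ) then x ^ Nat.dist (i:ℕ) (k:ℕ) * (-x) else 0)
      = if 1 ≤ (j:ℕ) then x ^ Nat.dist (i:ℕ) ((j:ℕ)-1) * (-x) else 0 := by
    by_cases hj : 1 ≤ (j:ℕ)
    · rw [if_pos hj]
      have hcond : ∀ k : Fin (n+1), ((k:ℕ)+1 = (j:ℕ)) ↔ (k = (⟨(j:ℕ)-1, by omega⟩ : Fin (n+1))) := by
        intro k; rw [Fin.ext_iff]; simp; omega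
      simp only [hcond]
      simp [Finset.sum_ite_eq']
    · rw [if_neg hj]
      exact Finset.sum_eq_zero fun k _ => if_neg (by omega)
  have hS3 : (∑ k : Fin (n+1), if (k:ℕ) = (j:ℕ)+1 then x ^ Nat.dist (i:ℕ) (k:ℕ) * (-x) else 0)
      = if (j:ℕ) < n then x ^ Nat.dist (i:ℕ) ((j:ℕ)+1) * (-x) else 0 := by
    by_cases hj : (j:ℕ) < n
    · rw [if_pos hj]
      have hcond : ∀ k : Fin (n+1), ((k:ℕ) = (j:ℕ)+1) ↔ (k = (⟨(j:ℕ)+1, by omega⟩ : Fin (n+1))) := by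
        intro k; rw [Fin.ext_iff]
      simp only [hcond]
      simp [Finset.sum_ite_eq']
    · rw [if_neg hj]
      refine Finset.sum_eq_zero fun k _ => if_neg ?_
      have := k.isLt; omega
  rw [hS1, hS2, hS3, inv_mul_eq_div, div_eq_iff h1x2]
  rcases Nat.lt_trichotomy (i:ℕ) (j:ℕ) with h | h | h
  · have hij : i ≠ j := fun e => by rw [e] at h; omega
    rw [if_neg hij, if_pos (by omega : 1 ≤ (j:ℕ))]
    by_cases hjn : (j:ℕ) = n
    · rw [if_neg (by omega : ¬ (j:ℕ) < n), if_pos (Or.inr hjn)]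
      have e1 : Nat.dist (i:ℕ) (j:ℕ) = ((j:ℕ) - 1 - i) + 1 := by simp [Nat.dist]; omega
      have e2 : Nat.dist (i:ℕ) ((j:ℕ)-1) = (j:ℕ) - 1 - i := by simp [Nat.dist]; omega
      rw [e1, e2]; ring
    · rw [if_pos (by omega : (j:ℕ) < n), if_neg (by omega : ¬((j:ℕ) = 0 ∨ (j:ℕ) = n))]
      have e1 : Nat.dist (i:ℕ) (j:ℕ) = ((j:ℕ) - 1 - i) + 1 := by simp [Nat.dist]; omega
      have e2 : Nat.dist (i:ℕ) ((j:ℕ)-1) = (j:ℕ) - 1 - i := by simp [Nat.dist]; omega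
      have e3 : Nat.dist (i:ℕ) ((j:ℕ)+1) = ((j:ℕ) - 1 - i) + 2 := by simp [Nat.dist]; omega
      rw [e1, e2, e3]; ring
  · have hij : i = j := Fin.ext h
    rw [if_pos hij, h]
    have e0 : Nat.dist (j:ℕ) (j:ℕ) = 0 := by simp [Nat.dist]
    by_cases hj0 : (j:ℕ) = 0
    · rw [if_neg (by omega : ¬ 1 ≤ (j:ℕ)), if_pos (by omega : (j:ℕ) < n), if_pos (Or.inl hj0), e0]
      have e3 : Nat.dist (j:ℕ) ((j:ℕ)+1) = 1 := by simp [Nat.dist]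
      rw [e3]; ring
    · by_cases hjn : (j:ℕ) = n
      · rw [if_pos (by omega : 1 ≤ (j:ℕ)), if_neg (by omega : ¬ (j:ℕ) < n), if_pos (Or.inr hjn), e0]
        have e2 : Nat.dist (j:ℕ) ((j:ℕ)-1) = 1 := by simp [Nat.dist]; omega
        rw [e2]; ring
      · rw [if_pos (by omega : 1 ≤ (j:ℕ)), if_pos (by omega : (j:ℕ) < n),
          if_neg (by omega : ¬((j:ℕ) = 0 ∨ (j:ℕ) = n)), e0]
        have e2 : Nat.dist (j:ℕ) ((j:ℕ)-1) = 1 := by simp [Nat.dist]; omega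
        have e3 : Nat.dist (j:ℕ) ((j:ℕ)+1) = 1 := by simp [Nat.dist]
        rw [e2, e3]; ring
  · have hij : i ≠ j := fun e => by rw [e] at h; omega
    have hjn : (j:ℕ) < n := by have := i.isLt; omega
    rw [if_neg hij, if_pos hjn]
    by_cases hj0 : (j:ℕ) = 0
    · rw [if_neg (by omega : ¬ 1 ≤ (j:ℕ)), if_pos (Or.inl hj0)]
      have e1 : Nat.dist (i:ℕ) (j:ℕ) = ((i:ℕ) - j - 1) + 1 := by simp [Nat.dist]; omega
      have e3 : Nat.dist (i:ℕ) ((j:ℕ)+1) = (i:ℕ) - j - 1 := by simp [Nat.dist]; omega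
      rw [e1, e3]; ring
    · rw [if_pos (by omega : 1 ≤ (j:ℕ)), if_neg (by omega : ¬((j:ℕ) = 0 ∨ (j:ℕ) = n))]
      have e1 : Nat.dist (i:ℕ) (j:ℕ) = ((i:ℕ) - j - 1) + 1 := by simp [Nat.dist]; omega
      have e2 : Nat.dist (i:ℕ) ((j:ℕ)-1) = ((i:ℕ) - j - 1) + 2 := by simp [Nat.dist]; omega
      have e3 : Nat.dist (i:ℕ) ((j:ℕ)+1) = (i:ℕ) - j - 1 := by simp [Nat.dist]; omega
      rw [e1, e2, e3]; ring

theorem stmt11 (n : ℕ) (hn : 1 ≤ n) (βn : ℝ) (hβ : 0 < βn)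
    (K00 : Matrix (Fin (n + 1)) (Fin (n + 1)) ℝ)
    (K10 : Matrix (Fin n) (Fin (n + 1)) ℝ)
    (hK00 : K00 = Matrix.of fun (i j : Fin (n + 1)) =>
      Real.exp (-βn * |(2 * (i : ℕ) : ℝ) - (2 * (j : ℕ) : ℝ)|))
    (hK10 : K10 = Matrix.of fun (a : Fin n) (b : Fin (n + 1)) =>
      Real.exp (-βn * |(2 * (a : ℕ) + 1 : ℝ) - (2 * (b : ℕ) : ℝ)|)) :
    K10 * K00⁻¹ =
      (Real.exp (-βn) / (1 + Real.exp (-2 * βn))) •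
        Matrix.of (fun (a : Fin n) (b : Fin (n + 1)) =>
          if (b : ℕ) = (a : ℕ) ∨ (b : ℕ) = (a : ℕ) + 1 then (1 : ℝ) else 0) := by
  set s : ℝ := Real.exp (-βn) with hs
  have hs0 : 0 < s := Real.exp_pos _
  have hs1 : s < 1 := Real.exp_lt_one_iff.mpr (by linarith)
  set x : ℝ := s ^ 2 with hxd
  have hx0 : 0 < x := by positivity
  have hx1 : x < 1 := by nlinarith
  have hx2 : Real.exp (-2 * βn) = x := by
    rw [hxd, hs, ← Real.exp_nat_mul]; norm_num
  have hA : ∀ i k : Fin (n+1), K00 i k = x ^ Nat.dist (i:ℕ) (k:ℕ) := by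
    intro i k
    have h1 : ((2 * (i:ℕ) : ℝ)) = ((2 * (i:ℕ) : ℕ) : ℝ) := by push_cast; ring
    have h2 : ((2 * (k:ℕ) : ℝ)) = ((2 * (k:ℕ) : ℕ) : ℝ) := by push_cast; ring
    rw [hK00]
    show Real.exp (-βn * |(2 * (i:ℕ) : ℝ) - (2 * (k:ℕ) : ℝ)|) = _
    rw [h1, h2, expAbsPow, hxd]
    have hd : Nat.dist (2 * (i:ℕ)) (2 * (k:ℕ)) = 2 * Nat.dist (i:ℕ) (k:ℕ) := by
      simp [Nat.dist]; omega
    rw [hd, pow_mul]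
  have hA' : ∀ (a : Fin n) (b : Fin (n+1)),
      K10 a b = s ^ Nat.dist (2 * (a:ℕ) + 1) (2 * (b:ℕ)) := by
    intro a b
    have h1 : ((2 * (a:ℕ) + 1 : ℝ)) = ((2 * (a:ℕ) + 1 : ℕ) : ℝ) := by push_cast; ring
    have h2 : ((2 * (b:ℕ) : ℝ)) = ((2 * (b:ℕ) : ℕ) : ℝ) := by push_cast; ring
    rw [hK10]
    show Real.exp (-βn * |(2 * (a:ℕ) + 1 : ℝ) - (2 * (b:ℕ) : ℝ)|) = _
    rw [h1, h2, expAbsPow, hs]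
  have hKM : K00 * Mtri n x = 1 := K00_mul_Mtri n hn x hx0 hx1 K00 hA
  set M : Matrix (Fin (n+1)) (Fin (n+1)) ℝ := Mtri n x with hM
  have hinv : K00⁻¹ = M := Matrix.inv_eq_right_inv hKM
  set B : Matrix (Fin n) (Fin (n+1)) ℝ :=
    Matrix.of (fun (a : Fin n) (b : Fin (n + 1)) =>
      if (b : ℕ) = (a : ℕ) ∨ (b : ℕ) = (a : ℕ) + 1 then (1 : ℝ) else 0) with hB
  have h1px : (1:ℝ) + x ≠ 0 := by positivity
  have hBK : K10 = (s / (1 + x)) • (B * K00) := by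
    ext a b
    rw [Matrix.smul_apply, Matrix.mul_apply, hA' a b]
    have hsplit : ∀ k : Fin (n+1), B a k =
        (if k = Fin.castSucc a then (1:ℝ) else 0) + (if k = Fin.succ a then 1 else 0) := by
      intro k
      simp only [hB, Matrix.of_apply, Fin.ext_iff, Fin.coe_castSucc, Fin.val_succ]
      by_cases h1 : (k:ℕ) = (a:ℕ) <;> by_cases h2 : (k:ℕ) = (a:ℕ)+1 <;>
        simp [h1, h2] <;> omega
    rw [Finset.sum_congr rfl (fun k _ => by rw [hsplit k, add_mul])]
    rw [Finset.sum_add_distrib]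
    simp only [ite_mul, zero_mul, one_mul, Finset.sum_ite_eq']
    simp only [Finset.mem_univ, if_true]
    rw [hA, hA, Fin.coe_castSucc, Fin.val_succ]
    rw [smul_eq_mul, div_mul_eq_mul_div, eq_div_iff h1px, hxd]
    rcases le_or_gt (b:ℕ) (a:ℕ) with h | h
    · have e1 : Nat.dist (2 * (a:ℕ) + 1) (2 * (b:ℕ)) = 2 * ((a:ℕ) - b) + 1 := by
        simp [Nat.dist]; omega
      have e2 : Nat.dist (a:ℕ) (b:ℕ) = (a:ℕ) - b := by simp [Nat.dist]; omega
      have e3 : Nat.dist ((a:ℕ)+1) (b:ℕ) = ((a:ℕ) - b) + 1 := by simp [Nat.dist]; omega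
      rw [e1, e2, e3]; ring
    · have e1 : Nat.dist (2 * (a:ℕ) + 1) (2 * (b:ℕ)) = 2 * ((b:ℕ) - a - 1) + 1 := by
        simp [Nat.dist]; omega
      have e2 : Nat.dist (a:ℕ) (b:ℕ) = ((b:ℕ) - a - 1) + 1 := by simp [Nat.dist]; omega
      have e3 : Nat.dist ((a:ℕ)+1) (b:ℕ) = (b:ℕ) - a - 1 := by simp [Nat.dist]; omega
      rw [e1, e2, e3]; ring
  rw [hinv, hBK, Matrix.smul_mul, Matrix.mul_assoc, hKM, Matrix.mul_one, hx2]
end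

section
/- Let T' ≥ 1, Δ > 0, σ > 0, δ ∈ (0,1), and set w = ln(e + √(T'Δ²/σ²)/δ) and ε = T'Δ²/(2σ²) + √(2T'Δ²w/σ²). If the log-likelihood-ratio random variable Z satisfies E₀[exp(λZ)] ≤ exp((λ²+λ)T'Δ²/(2σ²)) for all λ > 0, then P₁(S) - e^ε·P₀(S) ≤ δ for every measurable set S, where P₁(S) - e^ε P₀(S) ≤ E₀[exp(λ(Z - ε) + λ ln λ - (λ+1) ln(λ+1))] for the choice λ = (2εσ²/(T'Δ²) - 1)/2 > 0. -/
/-!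
With `a = T'Δ²/(2σ²)`, the sub-Gaussian bound on `E₀[e^{λZ}]` turns the given Chernoff-type bound
into `P₁(S) - e^ε P₀(S) ≤ exp((λ² + λ) a - λ ε + λ log λ - (λ+1) log(λ+1))`. The choice
`2aλ = ε - a = √(4aw)` completes the square: `(λ² + λ) a - λ ε = -(ε - a)²/(4a) = -w`; moreover
`λ log λ - (λ+1) log(λ+1) ≤ -log(λ+1)`. Hence the bound is at most
`e^{-w}/(λ+1) = δ / ((eδ + √(2a))(λ+1)) ≤ δ`, since `(√(2a) λ)² = 2w ≥ 1`.
-/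

open MeasureTheory Real

lemma integral_exp_mul_add_le {Ω : Type*} [MeasurableSpace Ω] {μ : Measure Ω} {Z : Ω → ℝ}
    {l c : ℝ} (h : ∫ ω, exp (l * Z ω) ∂μ ≤ exp c) (K : ℝ) :
    ∫ ω, exp (l * Z ω + K) ∂μ ≤ exp (c + K) := by
  simp_rw [exp_add, integral_mul_const]
  exact mul_le_mul_of_nonneg_right h (exp_pos K).le

lemma mul_log_sub_add_one_mul_log_add_one_le {l : ℝ} (hl : 0 < l) :
    l * log l - (l + 1) * log (l + 1) ≤ -log (l + 1) := by
  have := mul_le_mul_of_nonneg_left (log_le_log hl (by linarith : l ≤ l + 1)) hl.le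
  linarith

lemma sq_add_mul_sub_mul_eq_neg_sq_div {a ε l : ℝ} (ha : a ≠ 0) (hl : 2 * a * l = ε - a) :
    (l ^ 2 + l) * a - l * ε = -(ε - a) ^ 2 / (4 * a) := by
  obtain rfl : ε = 2 * a * l + a := by linarith
  field_simp
  ring

lemma sq_add_mul_sub_mul_add_sqrt_eq_neg {a w l : ℝ} (ha : 0 < a) (hw : 0 ≤ w)
    (hl : 2 * a * l = √(4 * a * w)) :
    (l ^ 2 + l) * a - l * (a + √(4 * a * w)) = -w := by
  rw [sq_add_mul_sub_mul_eq_neg_sq_div ha.ne' (by rw [hl]; ring), add_sub_cancel_left,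
    sq_sqrt (by positivity), neg_div, mul_div_cancel_left₀ _ (by positivity)]

lemma one_le_sqrt_two_mul_mul {a w l : ℝ} (ha : 0 < a) (hw : 1 ≤ 2 * w)
    (hl : 2 * a * l = √(4 * a * w)) :
    1 ≤ √(2 * a) * l := by
  have hw0 : 0 ≤ 4 * a * w := mul_nonneg (by positivity) (by linarith)
  have hl0 : 0 ≤ l := nonneg_of_mul_nonneg_right (hl ▸ sqrt_nonneg _) (by positivity)
  have hsq : (√(2 * a) * l) ^ 2 = 2 * w := by
    refine mul_left_cancel₀ (by positivity : 2 * a ≠ 0) ?_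
    have hl2 := congrArg (· ^ 2) hl
    simp only [sq_sqrt hw0] at hl2
    rw [mul_pow, sq_sqrt (by positivity)]
    linear_combination hl2
  nlinarith [mul_nonneg (sqrt_nonneg (2 * a)) hl0]

lemma neg_log_add_div_sub_log_add_one_le_log {c s δ l : ℝ} (hc : 0 ≤ c) (hδ : 0 < δ)
    (hl : 0 ≤ l) (hsl : 1 ≤ s * (l + 1)) :
    -log (c + s / δ) - log (l + 1) ≤ log δ := by
  have hs : 0 < s := by nlinarith
  have hprod : 1 ≤ δ * (c + s / δ) * (l + 1) := by
    rw [mul_add δ, mul_div_cancel₀ s hδ.ne']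
    nlinarith [mul_nonneg (mul_nonneg hδ.le hc) hl]
  have := log_nonneg hprod
  rw [log_mul (by positivity) (by positivity), log_mul hδ.ne' (by positivity)] at this
  linarith

theorem stmt14_general {Ω : Type*} [MeasurableSpace Ω]
    (P₀ P₁ : Measure Ω)
    (T' Δ σ δ : ℝ) (hT : 1 ≤ T') (hΔ : 0 < Δ) (hσ : 0 < σ)
    (hδ0 : 0 < δ)
    (Z : Ω → ℝ) (w ε lam : ℝ)
    (hw : w = Real.log (Real.exp 1 + Real.sqrt (T' * Δ ^ 2 / σ ^ 2) / δ))
    (hε : ε = T' * Δ ^ 2 / (2 * σ ^ 2) + Real.sqrt (2 * T' * Δ ^ 2 * w / σ ^ 2))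
    (hlam : lam = (2 * ε * σ ^ 2 / (T' * Δ ^ 2) - 1) / 2)
    (hmgf : ∀ l : ℝ, 0 < l →
      ∫ ω, Real.exp (l * Z ω) ∂P₀ ≤ Real.exp ((l ^ 2 + l) * T' * Δ ^ 2 / (2 * σ ^ 2)))
    (hS : ∀ S : Set Ω, MeasurableSet S →
      (P₁ S).toReal - Real.exp ε * (P₀ S).toReal ≤
        ∫ ω, Real.exp (lam * (Z ω - ε) + lam * Real.log lam -
          (lam + 1) * Real.log (lam + 1)) ∂P₀) :
    0 < lam ∧
    ∀ S : Set Ω, MeasurableSet S →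
      (P₁ S).toReal - Real.exp ε * (P₀ S).toReal ≤ δ := by
  obtain ⟨a, ha_def⟩ : ∃ a, a = T' * Δ ^ 2 / (2 * σ ^ 2) := ⟨_, rfl⟩
  have ha : 0 < a := by rw [ha_def]; positivity
  have hs : √(T' * Δ ^ 2 / σ ^ 2) = √(2 * a) := by rw [ha_def]; congr 1; field_simp
  rw [hs] at hw
  have hw1 : 1 ≤ w := by
    rw [hw, le_log_iff_exp_le (by positivity)]
    linarith [div_nonneg (sqrt_nonneg (2 * a)) hδ0.le]
  have hε' : ε = a + √(4 * a * w) := by rw [hε, ha_def]; congr 2; field_simp; ring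
  have hlam' : 2 * a * lam = √(4 * a * w) := by
    rw [← add_sub_cancel_left a (√_), ← hε', hlam, ha_def]; field_simp
  have hslam : 1 ≤ √(2 * a) * lam := one_le_sqrt_two_mul_mul ha (by linarith) hlam'
  have hlam_pos : 0 < lam := pos_of_mul_pos_right (one_pos.trans_le hslam) (sqrt_nonneg _)
  refine ⟨hlam_pos, fun S hSm => (hS S hSm).trans ?_⟩
  calc ∫ ω, exp (lam * (Z ω - ε) + lam * log lam - (lam + 1) * log (lam + 1)) ∂P₀
      = ∫ ω, exp (lam * Z ω + (-(lam * ε) + (lam * log lam - (lam + 1) * log (lam + 1)))) ∂P₀ := by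
        congr with ω; ring_nf
    _ ≤ exp ((lam ^ 2 + lam) * a - lam * ε + (lam * log lam - (lam + 1) * log (lam + 1))) :=
        (integral_exp_mul_add_le (hmgf lam hlam_pos) _).trans_eq (by rw [ha_def]; ring_nf)
    _ ≤ exp (log δ) := by
        rw [exp_le_exp, hε', sq_add_mul_sub_mul_add_sqrt_eq_neg ha (by linarith) hlam']
        have hslam' : 1 ≤ √(2 * a) * (lam + 1) :=
          hslam.trans (mul_le_mul_of_nonneg_left (by linarith) (sqrt_nonneg _))
        linarith [mul_log_sub_add_one_mul_log_add_one_le hlam_pos,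
          neg_log_add_div_sub_log_add_one_le_log (exp_pos 1).le hδ0 hlam_pos.le hslam']
    _ = δ := exp_log hδ0

theorem stmt14 {Ω : Type*} [MeasurableSpace Ω]
    (P₀ P₁ : Measure Ω) [IsProbabilityMeasure P₀] [IsProbabilityMeasure P₁]
    (T' Δ σ δ : ℝ) (hT : 1 ≤ T') (hΔ : 0 < Δ) (hσ : 0 < σ)
    (hδ0 : 0 < δ) (hδ1 : δ < 1)
    (Z : Ω → ℝ) (w ε lam : ℝ)
    (hw : w = Real.log (Real.exp 1 + Real.sqrt (T' * Δ ^ 2 / σ ^ 2) / δ))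
    (hε : ε = T' * Δ ^ 2 / (2 * σ ^ 2) + Real.sqrt (2 * T' * Δ ^ 2 * w / σ ^ 2))
    (hlam : lam = (2 * ε * σ ^ 2 / (T' * Δ ^ 2) - 1) / 2)
    (hmgf : ∀ l : ℝ, 0 < l →
      ∫ ω, Real.exp (l * Z ω) ∂P₀ ≤ Real.exp ((l ^ 2 + l) * T' * Δ ^ 2 / (2 * σ ^ 2)))
    (hS : ∀ S : Set Ω, MeasurableSet S →
      (P₁ S).toReal - Real.exp ε * (P₀ S).toReal ≤
        ∫ ω, Real.exp (lam * (Z ω - ε) + lam * Real.log lam -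
          (lam + 1) * Real.log (lam + 1)) ∂P₀) :
    0 < lam ∧
    ∀ S : Set Ω, MeasurableSet S →
      (P₁ S).toReal - Real.exp ε * (P₀ S).toReal ≤ δ :=
  stmt14_general P₀ P₁ T' Δ σ δ hT hΔ hσ hδ0 Z w ε lam hw hε hlam hmgf hS
end

section
/- Consider the linear program over λ₁,…,λ_m ∈ ℝⁿ: maximize Σᵢ λᵢᵀrᵢ subject to Σᵢ (I - γPᵢᵀ)λᵢ = 𝟙, λᵢ ≥ 0, where each Pᵢ is an n×n row-stochastic matrix and 0 ≤ γ < 1. Then there is an optimal solution λ₁*,…,λ_m* and a row-stochastic matrix P* (corresponding to a deterministic policy) such that Σᵢ λᵢ* = (I - γP*ᵀ)⁻¹𝟙, and each coordinate k of λᵢ* equals the k-th coordinate of Σᵢλᵢ* for exactly one i (the action chosen at state k) and 0 for all others. -/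
open Matrix BigOperators

lemma aux_nonneg {n : ℕ} {γ : ℝ} (hγ0 : 0 ≤ γ) (hγ1 : γ < 1)
    (Q : Matrix (Fin n) (Fin n) ℝ) (hQnn : ∀ a b, 0 ≤ Q a b) (hQrow : ∀ a, ∑ b, Q a b = 1)
    (x b : Fin n → ℝ) (hb : ∀ k, 0 ≤ b k) (hx : (1 - γ • Q) *ᵥ x = b) :
    ∀ k, 0 ≤ x k := by
  intro k
  have hne : (Finset.univ : Finset (Fin n)).Nonempty := ⟨k, Finset.mem_univ k⟩
  obtain ⟨k₀, -, hk₀⟩ := Finset.exists_min_image Finset.univ x hne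
  have hmin : ∀ j, x k₀ ≤ x j := fun j => hk₀ j (Finset.mem_univ j)
  rw [Matrix.sub_mulVec, Matrix.smul_mulVec, Matrix.one_mulVec] at hx
  have hxe : ∀ j, x j = b j + γ * ∑ l, Q j l * x l := by
    intro j
    have h := congrFun hx j
    simp only [Pi.sub_apply, Pi.smul_apply, smul_eq_mul, Matrix.mulVec, dotProduct] at h
    linarith
  have hS : x k₀ ≤ ∑ l, Q k₀ l * x l := by
    calc x k₀ = ∑ l, Q k₀ l * x k₀ := by rw [← Finset.sum_mul, hQrow k₀, one_mul]
    _ ≤ ∑ l, Q k₀ l * x l := by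
        apply Finset.sum_le_sum; intro l _
        exact mul_le_mul_of_nonneg_left (hmin l) (hQnn k₀ l)
  have h0 : 0 ≤ x k₀ := by nlinarith [hxe k₀, hb k₀, mul_le_mul_of_nonneg_left hS hγ0]
  linarith [hmin k]

lemma aux_isUnit {n : ℕ} {γ : ℝ} (hγ0 : 0 ≤ γ) (hγ1 : γ < 1)
    (Q : Matrix (Fin n) (Fin n) ℝ) (hQnn : ∀ a b, 0 ≤ Q a b) (hQrow : ∀ a, ∑ b, Q a b = 1) :
    IsUnit (1 - γ • Q) := by
  rw [Matrix.isUnit_iff_isUnit_det, isUnit_iff_ne_zero]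
  intro hdet
  obtain ⟨v, hv0, hv⟩ := Matrix.exists_mulVec_eq_zero_iff.mpr hdet
  have h1 := aux_nonneg hγ0 hγ1 Q hQnn hQrow v 0 (fun k => le_refl 0) hv
  have h2 := aux_nonneg hγ0 hγ1 Q hQnn hQrow (-v) 0 (fun k => le_refl 0)
    (by rw [Matrix.mulVec_neg, hv, neg_zero])
  exact hv0 (funext fun k => by
    have h2k := h2 k
    simp only [Pi.neg_apply, Pi.zero_apply] at h2k ⊢
    linarith [h1 k])

lemma aux_transpose_eq {n : ℕ} (γ : ℝ) (Q : Matrix (Fin n) (Fin n) ℝ) :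
    (1 - γ • Q)ᵀ = 1 - γ • Qᵀ := by
  rw [Matrix.transpose_sub, Matrix.transpose_smul, Matrix.transpose_one]

lemma aux_isUnit_t {n : ℕ} {γ : ℝ} (hγ0 : 0 ≤ γ) (hγ1 : γ < 1)
    (Q : Matrix (Fin n) (Fin n) ℝ) (hQnn : ∀ a b, 0 ≤ Q a b) (hQrow : ∀ a, ∑ b, Q a b = 1) :
    IsUnit (1 - γ • Qᵀ) := by
  have := aux_isUnit hγ0 hγ1 Q hQnn hQrow
  rw [Matrix.isUnit_iff_isUnit_det] at this ⊢
  rwa [← aux_transpose_eq, Matrix.det_transpose]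

lemma abs_sup'_sub_sup'_le {α : Type*} (s : Finset α) (hs : s.Nonempty) (f g : α → ℝ) (c : ℝ)
    (h : ∀ i ∈ s, |f i - g i| ≤ c) : |s.sup' hs f - s.sup' hs g| ≤ c := by
  rw [abs_sub_le_iff]
  constructor
  · rw [sub_le_iff_le_add]
    apply Finset.sup'_le
    intro i hi
    have h1 := abs_le.mp (h i hi)
    have h2 := Finset.le_sup' g hi
    linarith [h1.2]
  · rw [sub_le_iff_le_add]
    apply Finset.sup'_le
    intro i hi
    have h1 := abs_le.mp (h i hi)
    have h2 := Finset.le_sup' f hi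
    linarith [h1.1]

lemma swap_dot {n : ℕ} (γ : ℝ) (Q : Matrix (Fin n) (Fin n) ℝ) (x y : Fin n → ℝ) :
    x ⬝ᵥ ((1 - γ • Q) *ᵥ y) = ((1 - γ • Qᵀ) *ᵥ x) ⬝ᵥ y := by
  rw [Matrix.dotProduct_mulVec, ← Matrix.mulVec_transpose, aux_transpose_eq]

theorem stmt15 (n m : ℕ) (hn : 0 < n) (hm : 0 < m)
    (γ : ℝ) (hγ0 : 0 ≤ γ) (hγ1 : γ < 1)
    (P : Fin m → Matrix (Fin n) (Fin n) ℝ)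
    (hPnn : ∀ i a b, 0 ≤ P i a b)
    (hProw : ∀ i a, ∑ b, P i a b = 1)
    (r : Fin m → Fin n → ℝ) :
    ∃ (lam : Fin m → Fin n → ℝ) (pol : Fin n → Fin m),
      (∀ i k, 0 ≤ lam i k) ∧
      (∑ i, ((1 - γ • (P i)ᵀ) *ᵥ lam i)) = (fun _ => 1) ∧
      (∀ lam' : Fin m → Fin n → ℝ,
        (∀ i k, 0 ≤ lam' i k) →
        (∑ i, ((1 - γ • (P i)ᵀ) *ᵥ lam' i)) = (fun _ => 1) →
        ∑ i, ∑ k, lam' i k * r i k ≤ ∑ i, ∑ k, lam i k * r i k) ∧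
      (∀ Pstar : Matrix (Fin n) (Fin n) ℝ,
        Pstar = Matrix.of (fun k => P (pol k) k) →
        IsUnit (1 - γ • Pstarᵀ) ∧
        (∑ i, lam i) = (1 - γ • Pstarᵀ)⁻¹ *ᵥ (fun _ => 1) ∧
        (∀ k i, lam i k = if i = pol k then (∑ i', lam i' k) else 0)) := by
  haveI hFm : Nonempty (Fin m) := Fin.pos_iff_nonempty.mp hm
  haveI hFn : Nonempty (Fin n) := Fin.pos_iff_nonempty.mp hn
  have hune : (Finset.univ : Finset (Fin m)).Nonempty := Finset.univ_nonempty
  -- Bellman optimality operator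
  set T : (Fin n → ℝ) → (Fin n → ℝ) :=
    fun v k => Finset.univ.sup' hune (fun i => r i k + γ * ((P i) *ᵥ v) k) with hTdef
  have hdistk : ∀ v w : Fin n → ℝ, ∀ j, |v j - w j| ≤ dist v w := by
    intro v w j
    have := dist_le_pi_dist v w j
    rwa [Real.dist_eq] at this
  have hlip : ∀ v w, dist (T v) (T w) ≤ γ * dist v w := by
    intro v w
    rw [dist_pi_le_iff (by positivity)]
    intro k
    rw [Real.dist_eq]
    apply abs_sup'_sub_sup'_le
    intro i _
    have hPv : |((P i) *ᵥ v) k - ((P i) *ᵥ w) k| ≤ dist v w := by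
      have he : ((P i) *ᵥ v) k - ((P i) *ᵥ w) k = ∑ j, P i k j * (v j - w j) := by
        simp only [Matrix.mulVec, dotProduct, mul_sub, Finset.sum_sub_distrib]
      rw [he]
      calc |∑ j, P i k j * (v j - w j)| ≤ ∑ j, |P i k j * (v j - w j)| :=
            Finset.abs_sum_le_sum_abs _ _
        _ ≤ ∑ j, P i k j * dist v w := by
            apply Finset.sum_le_sum; intro j _
            rw [abs_mul, abs_of_nonneg (hPnn i k j)]
            exact mul_le_mul_of_nonneg_left (hdistk v w j) (hPnn i k j)
        _ = dist v w := by rw [← Finset.sum_mul, hProw i k, one_mul]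
    have he2 : r i k + γ * ((P i) *ᵥ v) k - (r i k + γ * ((P i) *ᵥ w) k)
        = γ * (((P i) *ᵥ v) k - ((P i) *ᵥ w) k) := by ring
    rw [he2, abs_mul, abs_of_nonneg hγ0]
    exact mul_le_mul_of_nonneg_left hPv hγ0
  have hcontract : ContractingWith ⟨γ, hγ0⟩ T :=
    ⟨by exact_mod_cast hγ1, LipschitzWith.of_dist_le_mul hlip⟩
  set v : Fin n → ℝ := ContractingWith.fixedPoint T hcontract with hvdef
  have hfix : T v = v := hcontract.fixedPoint_isFixedPt
  -- greedy policy
  have hpol' : ∀ k : Fin n, ∃ i : Fin m,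
      Finset.univ.sup' hune (fun i => r i k + γ * ((P i) *ᵥ v) k)
        = r i k + γ * ((P i) *ᵥ v) k := by
    intro k
    obtain ⟨i, -, hi⟩ := Finset.exists_mem_eq_sup' hune (fun i => r i k + γ * ((P i) *ᵥ v) k)
    exact ⟨i, hi⟩
  choose pol hpol using hpol'
  have hveq : ∀ k, v k = r (pol k) k + γ * ((P (pol k)) *ᵥ v) k := by
    intro k
    rw [← hpol k]
    exact (congrFun hfix k).symm
  have hvge : ∀ i k, r i k + γ * ((P i) *ᵥ v) k ≤ v k := by
    intro i k
    rw [← congrFun hfix k]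
    exact Finset.le_sup' (fun i => r i k + γ * ((P i) *ᵥ v) k) (Finset.mem_univ i)
  -- the policy matrix
  set Ps : Matrix (Fin n) (Fin n) ℝ := Matrix.of (fun k => P (pol k) k) with hPsdef
  have hPsnn : ∀ a b, 0 ≤ Ps a b := fun a b => hPnn (pol a) a b
  have hPsrow : ∀ a, ∑ b, Ps a b = 1 := fun a => hProw (pol a) a
  have hunit : IsUnit (1 - γ • Psᵀ) := aux_isUnit_t hγ0 hγ1 Ps hPsnn hPsrow
  have hdet : IsUnit (1 - γ • Ps).det :=
    (Matrix.isUnit_iff_isUnit_det _).mp (aux_isUnit hγ0 hγ1 Ps hPsnn hPsrow)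
  have hdetT : IsUnit (1 - γ • Psᵀ).det := (Matrix.isUnit_iff_isUnit_det _).mp hunit
  set u : Fin n → ℝ := (1 - γ • Psᵀ)⁻¹ *ᵥ (fun _ => 1) with hudef
  have hPu : (1 - γ • Psᵀ) *ᵥ u = fun _ => 1 := by
    rw [hudef, Matrix.mulVec_mulVec, Matrix.mul_nonsing_inv _ hdetT, Matrix.one_mulVec]
  -- nonnegativity of u
  have hNnn : ∀ j k : Fin n, 0 ≤ (1 - γ • Ps)⁻¹ j k := by
    intro j k
    have hcol : (1 - γ • Ps) *ᵥ (fun j => (1 - γ • Ps)⁻¹ j k)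
        = fun l => (1 : Matrix (Fin n) (Fin n) ℝ) l k := by
      funext l
      have := congrFun (congrFun (Matrix.mul_nonsing_inv _ hdet) l) k
      simpa [Matrix.mulVec, dotProduct, Matrix.mul_apply] using this
    exact aux_nonneg hγ0 hγ1 Ps hPsnn hPsrow _ _
      (fun l => by by_cases h : l = k <;> simp [Matrix.one_apply, h]) hcol j
  have hunn : ∀ k, 0 ≤ u k := by
    intro k
    have hui : u k = ∑ j, (1 - γ • Ps)⁻¹ j k := by
      rw [hudef, ← aux_transpose_eq, ← Matrix.transpose_nonsing_inv]
      simp [Matrix.mulVec, dotProduct, Matrix.transpose_apply]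
    rw [hui]
    exact Finset.sum_nonneg fun j _ => hNnn j k
  -- the dual solution
  set lam : Fin m → Fin n → ℝ := fun i k => if i = pol k then u k else 0 with hlamdef
  have hlamnn : ∀ i k, 0 ≤ lam i k := by
    intro i k
    by_cases h : i = pol k <;> simp [hlamdef, h, hunn k]
  have hsum_lam : ∀ k, ∑ i, lam i k = u k := by
    intro k
    simp [hlamdef]
  -- feasibility of lam
  have hfeas : (∑ i, ((1 - γ • (P i)ᵀ) *ᵥ lam i)) = (fun _ => 1) := by
    funext k
    have hLHS : (∑ i, ((1 - γ • (P i)ᵀ) *ᵥ lam i)) k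
        = ∑ i, (lam i k - γ * ∑ j, P i j k * lam i j) := by
      simp only [Finset.sum_apply]
      congr 1; funext i
      rw [Matrix.sub_mulVec, Matrix.smul_mulVec, Matrix.one_mulVec]
      simp [Matrix.mulVec, dotProduct, Matrix.transpose_apply]
    rw [hLHS]
    have hswap : ∑ i, (lam i k - γ * ∑ j, P i j k * lam i j)
        = (∑ i, lam i k) - γ * ∑ j, (Ps j k * u j) := by
      rw [Finset.sum_sub_distrib, ← Finset.mul_sum, Finset.sum_comm]
      congr 2
      · congr 1; funext j
        simp [hlamdef, Finset.sum_ite_eq', hPsdef]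
    rw [hswap, hsum_lam k]
    have := congrFun hPu k
    rw [Matrix.sub_mulVec, Matrix.smul_mulVec, Matrix.one_mulVec] at this
    simpa [Matrix.mulVec, dotProduct, Matrix.transpose_apply] using this
  -- the common value of feasible objectives against the Bellman slack
  have hkey : ∀ lam' : Fin m → Fin n → ℝ,
      (∑ i, ((1 - γ • (P i)ᵀ) *ᵥ lam' i)) = (fun _ => 1) →
      ∑ i, ∑ k, lam' i k * (v k - γ * ((P i) *ᵥ v) k) = ∑ k, v k := by
    intro lam' hfe
    have step1 : ∀ i, ∑ k, lam' i k * (v k - γ * ((P i) *ᵥ v) k)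
        = ∑ k, ((1 - γ • (P i)ᵀ) *ᵥ lam' i) k * v k := by
      intro i
      have : lam' i ⬝ᵥ ((1 - γ • (P i)) *ᵥ v) = ((1 - γ • (P i)ᵀ) *ᵥ lam' i) ⬝ᵥ v :=
        swap_dot γ (P i) (lam' i) v
      simp only [dotProduct] at this
      calc ∑ k, lam' i k * (v k - γ * ((P i) *ᵥ v) k)
          = ∑ k, lam' i k * ((1 - γ • (P i)) *ᵥ v) k := by
            congr 1; funext k
            rw [Matrix.sub_mulVec, Matrix.smul_mulVec, Matrix.one_mulVec]
            simp
        _ = ∑ k, ((1 - γ • (P i)ᵀ) *ᵥ lam' i) k * v k := this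
    calc ∑ i, ∑ k, lam' i k * (v k - γ * ((P i) *ᵥ v) k)
        = ∑ i, ∑ k, ((1 - γ • (P i)ᵀ) *ᵥ lam' i) k * v k := by
          exact Finset.sum_congr rfl fun i _ => step1 i
      _ = ∑ k, (∑ i, ((1 - γ • (P i)ᵀ) *ᵥ lam' i) k) * v k := by
          rw [Finset.sum_comm]
          congr 1; funext k
          rw [Finset.sum_mul]
      _ = ∑ k, v k := by
          apply Finset.sum_congr rfl
          intro k _
          have := congrFun hfe k
          simp only [Finset.sum_apply] at this
          rw [this, one_mul]
  -- lam's objective equals ∑ v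
  have hlamobj : ∑ i, ∑ k, lam i k * r i k = ∑ k, v k := by
    rw [← hkey lam hfeas]
    apply Finset.sum_congr rfl; intro i _
    apply Finset.sum_congr rfl; intro k _
    by_cases h : i = pol k
    · subst h
      congr 1
      have := hveq k
      linarith
    · simp [hlamdef, h]
  refine ⟨lam, pol, hlamnn, hfeas, ?_, ?_⟩
  · -- optimality
    intro lam' hnn' hfe'
    rw [hlamobj, ← hkey lam' hfe']
    apply Finset.sum_le_sum; intro i _
    apply Finset.sum_le_sum; intro k _
    exact mul_le_mul_of_nonneg_left (by linarith [hvge i k]) (hnn' i k)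
  · intro Pstar hPstar
    have hPP : Pstar = Ps := hPstar
    subst hPP
    refine ⟨hunit, ?_, ?_⟩
    · funext k
      simp only [Finset.sum_apply]
      rw [hsum_lam k, hudef]
    · intro k i
      rw [hsum_lam k]
end

section
/- Let the value functions before and after one stochastic gradient update satisfy ‖Q - Q₀‖_∞ ≤ 4αL(k+1)/B, where Q - Q' ∈ H¹(0,1) for two runs with neighboring rewards, and Q - Q' is L-Lipschitz. Then with β = B/(4α(k+1)), the RKHS norm in the Sobolev space H¹ with kernel exp(-β|x-y|) satisfies ‖Q - Q'‖²_H ≤ ((4α(k+1)/B)² + 4α(k+1)/B)·L². -/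
/-!
By the Lebesgue differentiation theorem `f` is differentiable with derivative `f'` almost
everywhere, so the Lipschitz bound gives `|f'| ≤ L` a.e. Bounding `f` by `M` and `f'` by `L`
termwise gives `‖f‖² ≤ (1 + β/2) M² + L²/(2β)`, and the choice of `β` is exactly `M = L/β`,
which turns this into `(β⁻² + β⁻¹) L²`.
-/

open MeasureTheory intervalIntegral Set Filter Topology

theorem ae_abs_le_of_eq_integral_of_lipschitz {f f' : ℝ → ℝ} {a b L : ℝ} (hL : 0 ≤ L)
    (hint : IntervalIntegrable f' volume a b)
    (hrep : ∀ x ∈ Icc a b, f x = f a + ∫ t in a..x, f' t)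
    (hLip : ∀ x ∈ Icc a b, ∀ y ∈ Icc a b, |f x - f y| ≤ L * |x - y|) :
    ∀ᵐ x, x ∈ Icc a b → |f' x| ≤ L := by
  have hne_a : ∀ᵐ x : ℝ, x ≠ a := by simp [ae_iff, measure_singleton]
  have hne_b : ∀ᵐ x : ℝ, x ≠ b := by simp [ae_iff, measure_singleton]
  filter_upwards [hint.ae_hasDerivAt_integral, hne_a, hne_b] with x hderiv hxa hxb hx
  have hx' : x ∈ Ioo a b := ⟨lt_of_le_of_ne hx.1 hxa.symm, lt_of_le_of_ne hx.2 hxb⟩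
  have hab : a ≤ b := hx.1.trans hx.2
  have hnhds : Icc a b ∈ 𝓝 x := Icc_mem_nhds hx'.1 hx'.2
  have hf : HasDerivAt f (f' x) x := by
    have := ((hderiv (uIcc_of_le hab ▸ hx) a left_mem_uIcc).const_add (f a))
    exact this.congr_of_eventuallyEq (eventually_of_mem hnhds hrep)
  rw [← hf.deriv]
  exact norm_deriv_le_of_lip' (f := f) hL (eventually_of_mem hnhds fun y hy => hLip y hy x hx)

theorem intervalIntegral_sq_le_of_ae_abs_le {g : ℝ → ℝ} {a b C : ℝ} (hab : a ≤ b)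
    (hg : IntervalIntegrable (fun x => g x ^ 2) volume a b)
    (hbound : ∀ᵐ x, x ∈ Icc a b → |g x| ≤ C) :
    ∫ x in a..b, g x ^ 2 ≤ C ^ 2 * (b - a) := by
  have hsq : (fun x => g x ^ 2) ≤ᵐ[volume.restrict (Icc a b)] fun _ => C ^ 2 := by
    filter_upwards [(ae_restrict_iff' measurableSet_Icc).mpr hbound] with x hx
    simpa only [sq_abs] using pow_le_pow_left₀ (abs_nonneg _) hx 2
  calc ∫ x in a..b, g x ^ 2 ≤ ∫ _ in a..b, C ^ 2 :=
        integral_mono_ae_restrict hab hg intervalIntegrable_const hsq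
    _ = C ^ 2 * (b - a) := by simp [mul_comm]

/-- Squared norm of `H¹(0,1)` as the reproducing kernel Hilbert space of `exp (-β |x - y|)`;
`f'` stands for the weak derivative of `f`. -/
noncomputable def expKernelNormSq (β : ℝ) (f f' : ℝ → ℝ) : ℝ :=
  (1 / 2) * ((f 0) ^ 2 + (f 1) ^ 2) +
    (1 / (2 * β)) * ∫ x in (0 : ℝ)..1, ((f' x) ^ 2 + β ^ 2 * (f x) ^ 2)

theorem expKernelNormSq_le {β M L : ℝ} {f f' : ℝ → ℝ} (hβ : 0 < β)
    (hf : IntervalIntegrable (fun x => f x ^ 2) volume 0 1)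
    (hf' : IntervalIntegrable (fun x => f' x ^ 2) volume 0 1)
    (hfM : ∀ x ∈ Icc (0 : ℝ) 1, |f x| ≤ M)
    (hf'L : ∀ᵐ x, x ∈ Icc (0 : ℝ) 1 → |f' x| ≤ L) :
    expKernelNormSq β f f' ≤ (1 + β / 2) * M ^ 2 + L ^ 2 / (2 * β) := by
  have hsq_le : ∀ x ∈ Icc (0 : ℝ) 1, f x ^ 2 ≤ M ^ 2 := fun x hx => by
    simpa only [sq_abs] using pow_le_pow_left₀ (abs_nonneg _) (hfM x hx) 2
  have hf0 := hsq_le 0 (left_mem_Icc.mpr zero_le_one)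
  have hf1 := hsq_le 1 (right_mem_Icc.mpr zero_le_one)
  have hIf : ∫ x in (0 : ℝ)..1, f x ^ 2 ≤ M ^ 2 := by
    simpa using intervalIntegral_sq_le_of_ae_abs_le zero_le_one hf (ae_of_all _ hfM)
  have hIf' : ∫ x in (0 : ℝ)..1, f' x ^ 2 ≤ L ^ 2 := by
    simpa using intervalIntegral_sq_le_of_ae_abs_le zero_le_one hf' hf'L
  have hsplit : ∫ x in (0 : ℝ)..1, (f' x ^ 2 + β ^ 2 * f x ^ 2)
      = (∫ x in (0 : ℝ)..1, f' x ^ 2) + β ^ 2 * ∫ x in (0 : ℝ)..1, f x ^ 2 := by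
    rw [intervalIntegral.integral_add hf' (hf.const_mul _), intervalIntegral.integral_const_mul]
  have hIsum : ∫ x in (0 : ℝ)..1, (f' x ^ 2 + β ^ 2 * f x ^ 2) ≤ L ^ 2 + β ^ 2 * M ^ 2 := by
    rw [hsplit]; gcongr
  calc expKernelNormSq β f f'
      ≤ (1 / 2) * (M ^ 2 + M ^ 2) + (1 / (2 * β)) * (L ^ 2 + β ^ 2 * M ^ 2) := by
        unfold expKernelNormSq; gcongr
    _ = (1 + β / 2) * M ^ 2 + L ^ 2 / (2 * β) := by field_simp; ring

theorem stmt18 (α L k B : ℝ) (hα : 0 < α) (hL : 0 ≤ L) (hk : 0 < k) (hB : 0 < B)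
    (β : ℝ) (hβ : β = B / (4 * α * (k + 1)))
    (f f' : ℝ → ℝ)
    (hcont : ContinuousOn f (Set.Icc 0 1))
    (hint : IntervalIntegrable f' volume 0 1)
    (hint2 : IntervalIntegrable (fun x => (f' x) ^ 2) volume 0 1)
    (hrep : ∀ x ∈ Set.Icc (0 : ℝ) 1, f x = f 0 + ∫ t in (0 : ℝ)..x, f' t)
    (hLip : ∀ x ∈ Set.Icc (0 : ℝ) 1, ∀ y ∈ Set.Icc (0 : ℝ) 1,
      |f x - f y| ≤ L * |x - y|)
    (hbnd : ∀ x ∈ Set.Icc (0 : ℝ) 1, |f x| ≤ 4 * α * L * (k + 1) / B) :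
    (1 / 2) * ((f 0) ^ 2 + (f 1) ^ 2) +
        (1 / (2 * β)) * ∫ x in (0 : ℝ)..1, ((f' x) ^ 2 + β ^ 2 * (f x) ^ 2)
      ≤ ((4 * α * (k + 1) / B) ^ 2 + 4 * α * (k + 1) / B) * L ^ 2 := by
  have hβpos : 0 < β := by rw [hβ]; positivity
  have hM : 4 * α * L * (k + 1) / B = L / β := by rw [hβ]; field_simp
  have hf : IntervalIntegrable (fun x => f x ^ 2) volume 0 1 :=
    (hcont.pow 2).intervalIntegrable_of_Icc zero_le_one
  calc expKernelNormSq β f f'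
      ≤ (1 + β / 2) * (L / β) ^ 2 + L ^ 2 / (2 * β) :=
        expKernelNormSq_le hβpos hf hint2 (hM ▸ hbnd)
          (ae_abs_le_of_eq_integral_of_lipschitz hL hint hrep hLip)
    _ = ((4 * α * (k + 1) / B) ^ 2 + 4 * α * (k + 1) / B) * L ^ 2 := by
        rw [hβ]; field_simp; ring
end
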